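/- Density inequality at the averaged quantile: Let φ(x) := (1/√(2π)) e^{−x²/2} be the standard normal density and Φ its cumulative distribution function. For every t ∈ ℝ and h ∈ ℝ satisfying Φ(h) = (1/2) Φ(t − 1) + (1/2) Φ(t + 1), one has φ(h) > (1/2) φ(t − 1) + (1/2) φ(t + 1). -/

import Mathlib

open MeasureTheory

/-- The standard normal density `φ(x) = (1/√(2π)) e^{−x²/2}`. -/
noncomputable def stdNormalPDF (x : ℝ) : ℝ :=
  Real.exp (-x ^ 2 / 2) / Real.sqrt (2 * Real.pi)

/-- The standard normal cumulative distribution function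
`Φ(t) = ∫_{−∞}^t φ(u) du`. -/
noncomputable def stdNormalCDF (t : ℝ) : ℝ :=
  ∫ u in Set.Iic t, stdNormalPDF u

/-!
Fix `h` and put `g(x) = φ(x) + h Φ(x)`. Since `φ' = -x φ`, we get `g'(x) = (h - x) φ(x)`, so `g`
has a strict global maximum at `h`. Adding `g(a) < g(h)` and `g(b) < g(h)`, the `Φ`-terms cancel
exactly when `2 Φ(h) = Φ(a) + Φ(b)`, leaving `φ(a) + φ(b) < 2 φ(h)`.
-/

open Set

lemma stdNormalPDF_pos (x : ℝ) : 0 < stdNormalPDF x := by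
  unfold stdNormalPDF
  positivity

lemma continuous_stdNormalPDF : Continuous stdNormalPDF := by
  unfold stdNormalPDF
  fun_prop

lemma integrable_stdNormalPDF : Integrable stdNormalPDF := by
  have h := (integrable_exp_neg_mul_sq (b := 1 / 2) (by norm_num)).div_const
    (Real.sqrt (2 * Real.pi))
  convert h using 2 with x
  unfold stdNormalPDF
  ring_nf

lemma hasDerivAt_stdNormalPDF (x : ℝ) : HasDerivAt stdNormalPDF (-x * stdNormalPDF x) x := by
  have h := ((((hasDerivAt_pow 2 x).fun_neg).div_const 2).exp).div_const (Real.sqrt (2 * Real.pi))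
  unfold stdNormalPDF
  exact h.congr_deriv (by push_cast; ring)

lemma stdNormalCDF_sub_stdNormalCDF (x y : ℝ) :
    stdNormalCDF y - stdNormalCDF x = ∫ u in x..y, stdNormalPDF u :=
  intervalIntegral.integral_Iic_sub_Iic integrable_stdNormalPDF.integrableOn
    integrable_stdNormalPDF.integrableOn

lemma hasDerivAt_stdNormalCDF (x : ℝ) : HasDerivAt stdNormalCDF (stdNormalPDF x) x := by
  have hΦ : stdNormalCDF = fun y => stdNormalCDF 0 + ∫ u in (0 : ℝ)..y, stdNormalPDF u := by
    ext y
    rw [← stdNormalCDF_sub_stdNormalCDF]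
    ring
  rw [hΦ]
  exact ((continuous_stdNormalPDF.integral_hasStrictDerivAt 0 x).hasDerivAt).const_add _

lemma stdNormalCDF_strictMono : StrictMono stdNormalCDF :=
  strictMono_of_hasDerivAt_pos hasDerivAt_stdNormalCDF stdNormalPDF_pos

lemma hasDerivAt_stdNormalPDF_add_mul_stdNormalCDF (c x : ℝ) :
    HasDerivAt (fun y => stdNormalPDF y + c * stdNormalCDF y) ((c - x) * stdNormalPDF x) x :=
  ((hasDerivAt_stdNormalPDF x).add ((hasDerivAt_stdNormalCDF x).const_mul c)).congr_deriv
    (by ring)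

lemma stdNormalPDF_add_mul_stdNormalCDF_lt_of_ne {c x : ℝ} (hx : x ≠ c) :
    stdNormalPDF x + c * stdNormalCDF x < stdNormalPDF c + c * stdNormalCDF c := by
  set g := fun y => stdNormalPDF y + c * stdNormalCDF y
  have hg : Continuous g := continuous_iff_continuousAt.2 fun y =>
    (hasDerivAt_stdNormalPDF_add_mul_stdNormalCDF c y).continuousAt
  have hg' (s : Set ℝ) (y : ℝ) : HasDerivWithinAt g ((c - y) * stdNormalPDF y) (interior s) y :=
    (hasDerivAt_stdNormalPDF_add_mul_stdNormalCDF c y).hasDerivWithinAt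
  rcases hx.lt_or_gt with hxc | hcx
  · refine strictMonoOn_of_hasDerivWithinAt_pos (convex_Iic c) hg.continuousOn
      (fun y _ => hg' _ y) (fun y hy => ?_) (mem_Iic.2 hxc.le) self_mem_Iic hxc
    rw [interior_Iic] at hy
    exact mul_pos (sub_pos.2 hy) (stdNormalPDF_pos y)
  · refine strictAntiOn_of_hasDerivWithinAt_neg (convex_Ici c) hg.continuousOn
      (fun y _ => hg' _ y) (fun y hy => ?_) self_mem_Ici (mem_Ici.2 hcx.le) hcx
    rw [interior_Ici] at hy
    exact mul_neg_of_neg_of_pos (sub_neg.2 hy) (stdNormalPDF_pos y)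

lemma stdNormalPDF_add_lt_two_mul_of_two_mul_stdNormalCDF_eq {a b h : ℝ} (hab : a ≠ b)
    (hh : 2 * stdNormalCDF h = stdNormalCDF a + stdNormalCDF b) :
    stdNormalPDF a + stdNormalPDF b < 2 * stdNormalPDF h := by
  have hΦ : stdNormalCDF a ≠ stdNormalCDF b := stdNormalCDF_strictMono.injective.ne hab
  have hah : a ≠ h := by rintro rfl; exact hΦ (by linarith)
  have hbh : b ≠ h := by rintro rfl; exact hΦ (by linarith)
  have hga := stdNormalPDF_add_mul_stdNormalCDF_lt_of_ne hah
  have hgb := stdNormalPDF_add_mul_stdNormalCDF_lt_of_ne hbh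
  linear_combination hga + hgb + h * hh

/-- Density inequality at the averaged quantile: if
`Φ(h) = (1/2)Φ(t−1) + (1/2)Φ(t+1)`, then `φ(h) > (1/2)φ(t−1) + (1/2)φ(t+1)`. -/
theorem density_inequality_at_averaged_quantile
    (t h : ℝ)
    (hh : stdNormalCDF h = (1 / 2) * stdNormalCDF (t - 1) + (1 / 2) * stdNormalCDF (t + 1)) :
    stdNormalPDF h > (1 / 2) * stdNormalPDF (t - 1) + (1 / 2) * stdNormalPDF (t + 1) := by
  have key := stdNormalPDF_add_lt_two_mul_of_two_mul_stdNormalCDF_eq (a := t - 1) (b := t + 1)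
    (h := h) (by linarith) (by linarith)
  linarith
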